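/- Let Q ∈ ℝ^{n×n} be symmetric positive definite, a ∈ ℝ^n, c ∈ ℝ, and set κ = aᵀQ⁻¹a and γ = Q⁻¹a/(1 + κ). Define Ŷ_{c,Q} = {(x, z, t, w) ∈ ℝ^n × ℝ × ℝ × ℝ : z ∈ {0,1}, t ≥ xᵀQx + (c + w − aᵀx)², and w(1 − z) = 0}. Then the closure of the convex hull of Ŷ_{c,Q} equals the set of (x, z, t, w) ∈ ℝ^n × [0,1] × ℝ × ℝ for which there exists s ≥ 0 with w² ≤ s·z·(1 + κ) and t ≥ c² + 2c(w − aᵀx) + (x − w·γ)ᵀ(Q + aaᵀ)(x − w·γ) + s. -/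

import Mathlib

/-!
Completing the square gives `xᵀQx + (c + w - aᵀx)² = F(x, w) + w² / (1 + κ)` with
`F(x, w) = c² + 2c(w - aᵀx) + (x - wγ)ᵀ(Q + aaᵀ)(x - wγ)`, because `(Q + aaᵀ)γ = a`.
So `Ŷ` is the on/off epigraph of `F + w² / (1 + κ)`. Since `F` is convex and the rotated cone
`w² ≤ s z (1 + κ)` is convex, the perspective relaxation is a closed convex set containing `Ŷ`.
Conversely, since `F` is affine along `(γ, 1)`, a point `(x, z, t, w)` of the relaxation with
`0 < z` is the combination `z • (x₀ + (w / z)γ, 1, t₁, w / z) + (1 - z) • (x₀, 0, F(x₀, 0), 0)`,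
`x₀ = x - wγ`, of two points of `Ŷ`: the `F`-parts add up exactly and `w² / (z(1 + κ)) ≤ s` pays
for the rest. So the convex hull of `Ŷ` is already closed and equals the relaxation.
-/

open Matrix Set

lemma comb_sq_le_comb_mul_comb {l m w₁ w₂ u₁ u₂ v₁ v₂ : ℝ} (hl : 0 ≤ l) (hm : 0 ≤ m)
    (hu₁ : 0 ≤ u₁) (hv₁ : 0 ≤ v₁) (hu₂ : 0 ≤ u₂) (hv₂ : 0 ≤ v₂)
    (h₁ : w₁ ^ 2 ≤ u₁ * v₁) (h₂ : w₂ ^ 2 ≤ u₂ * v₂) :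
    (l * w₁ + m * w₂) ^ 2 ≤ (l * u₁ + m * u₂) * (l * v₁ + m * v₂) := by
  have hcross : 2 * (w₁ * w₂) ≤ u₁ * v₂ + u₂ * v₁ :=
    two_mul_le_add_of_sq_le_mul (by positivity) (by positivity) <| by
      calc (w₁ * w₂) ^ 2 = w₁ ^ 2 * w₂ ^ 2 := by ring
        _ ≤ (u₁ * v₁) * (u₂ * v₂) := mul_le_mul h₁ h₂ (sq_nonneg _) (by positivity)
        _ = (u₁ * v₂) * (u₂ * v₁) := by ring
  linarith [mul_le_mul_of_nonneg_left hcross (mul_nonneg hl hm),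
    mul_le_mul_of_nonneg_left h₁ (sq_nonneg l), mul_le_mul_of_nonneg_left h₂ (sq_nonneg m)]

section PerspectiveRelaxation

variable {E : Type*} {f : E × ℝ → ℝ} {K : ℝ}

/-- Points are `(x, z, t, w)`. -/
def onOffEpigraph (f : E × ℝ → ℝ) (K : ℝ) : Set (E × ℝ × ℝ × ℝ) :=
  {p | (p.2.1 = 0 ∨ p.2.1 = 1) ∧ f (p.1, p.2.2.2) + p.2.2.2 ^ 2 / K ≤ p.2.2.1 ∧
    p.2.2.2 * (1 - p.2.1) = 0}

/-- `s` is the closed perspective form of `w² / (K z)`. -/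
def perspectiveRelaxation (f : E × ℝ → ℝ) (K : ℝ) : Set (E × ℝ × ℝ × ℝ) :=
  {p | p.2.1 ∈ Icc (0 : ℝ) 1 ∧ ∃ s : ℝ, 0 ≤ s ∧ p.2.2.2 ^ 2 ≤ s * p.2.1 * K ∧
    f (p.1, p.2.2.2) + s ≤ p.2.2.1}

lemma perspectiveRelaxation_eq (hK : 0 ≤ K) :
    perspectiveRelaxation f K = {p | p.2.1 ∈ Icc (0 : ℝ) 1 ∧ f (p.1, p.2.2.2) ≤ p.2.2.1 ∧
      p.2.2.2 ^ 2 ≤ (p.2.2.1 - f (p.1, p.2.2.2)) * p.2.1 * K} := by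
  ext ⟨x, z, t, w⟩
  constructor
  · rintro ⟨hz, s, hs, hw, ht⟩
    refine ⟨hz, by linarith, hw.trans ?_⟩
    exact mul_le_mul_of_nonneg_right (mul_le_mul_of_nonneg_right (by linarith) hz.1) hK
  · rintro ⟨hz, ht, hw⟩
    exact ⟨hz, t - f (x, w), by linarith, hw, by linarith⟩

lemma isClosed_perspectiveRelaxation [TopologicalSpace E] (hf : Continuous f) (hK : 0 ≤ K) :
    IsClosed (perspectiveRelaxation f K) := by
  rw [perspectiveRelaxation_eq hK]
  have hf' : Continuous fun p : E × ℝ × ℝ × ℝ => f (p.1, p.2.2.2) := by fun_prop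
  exact (isClosed_Icc.preimage (continuous_fst.comp continuous_snd)).inter
    ((isClosed_le hf' (by fun_prop)).inter (isClosed_le (by fun_prop) (by fun_prop :
      Continuous fun p : E × ℝ × ℝ × ℝ => (p.2.2.1 - f (p.1, p.2.2.2)) * p.2.1 * K)))

lemma onOffEpigraph_subset_perspectiveRelaxation (hK : 0 < K) :
    onOffEpigraph f K ⊆ perspectiveRelaxation f K := by
  rintro ⟨x, z, t, w⟩ ⟨rfl | rfl, ht, hw⟩
  · obtain rfl : w = 0 := by simpa using hw
    exact ⟨by norm_num, 0, le_rfl, by simp, by simpa using ht⟩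
  · refine ⟨by norm_num, w ^ 2 / K, by positivity, ?_, ht⟩
    rw [mul_one, div_mul_cancel₀ _ hK.ne']

variable [AddCommGroup E] [Module ℝ E]

lemma convex_perspectiveRelaxation (hf : ConvexOn ℝ univ f) (hK : 0 ≤ K) :
    Convex ℝ (perspectiveRelaxation f K) := by
  rintro ⟨x₁, z₁, t₁, w₁⟩ ⟨hz₁, s₁, hs₁, hw₁, ht₁⟩ ⟨x₂, z₂, t₂, w₂⟩ ⟨hz₂, s₂, hs₂, hw₂, ht₂⟩
    l m hl hm hlm
  dsimp only at hz₁ hw₁ ht₁ hz₂ hw₂ ht₂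
  have hf₁₂ : f (l • x₁ + m • x₂, l * w₁ + m * w₂) ≤ l * f (x₁, w₁) + m * f (x₂, w₂) := by
    simpa using hf.2 (mem_univ (x₁, w₁)) (mem_univ (x₂, w₂)) hl hm hlm
  have hcone : (l * w₁ + m * w₂) ^ 2 ≤ (l * s₁ + m * s₂) * (l * z₁ + m * z₂) * K := by
    have := comb_sq_le_comb_mul_comb hl hm hs₁ (mul_nonneg hz₁.1 hK) hs₂ (mul_nonneg hz₂.1 hK)
      (by rwa [← mul_assoc]) (by rwa [← mul_assoc])
    linarith
  simp only [Prod.smul_mk, Prod.mk_add_mk, smul_eq_mul]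
  refine ⟨convex_Icc 0 1 hz₁ hz₂ hl hm hlm, l * s₁ + m * s₂, by positivity, hcone, ?_⟩
  linarith [mul_le_mul_of_nonneg_left ht₁ hl, mul_le_mul_of_nonneg_left ht₂ hm]

lemma perspectiveRelaxation_subset_convexHull (hK : 0 < K) (γ : E) (δ : ℝ)
    (haff : ∀ u v, f (u + v • γ, v) = f (u, 0) + v * δ) :
    perspectiveRelaxation f K ⊆ convexHull ℝ (onOffEpigraph f K) := by
  rintro ⟨x, z, t, w⟩ ⟨⟨hz₀, hz₁⟩, s, hs, hw, ht⟩
  dsimp only at hz₀ hz₁ hw ht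
  obtain rfl | hz := hz₀.eq_or_lt
  · obtain rfl : w = 0 := by nlinarith
    exact subset_convexHull ℝ _ ⟨Or.inl rfl, by simp; linarith, by ring⟩
  set u := x - w • γ
  have hfx : f (x, w) = f (u, 0) + w * δ := by rw [← haff, sub_add_cancel]
  have hsw : w ^ 2 / (z * K) ≤ s := by
    rw [div_le_iff₀ (by positivity)]; linarith
  set t₁ := (t - (1 - z) * f (u, 0)) / z
  have hP₀ : (u, (0 : ℝ), f (u, 0), (0 : ℝ)) ∈ onOffEpigraph f K := ⟨Or.inl rfl, by simp, by ring⟩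
  have hP₁ : (u + (w / z) • γ, (1 : ℝ), t₁, w / z) ∈ onOffEpigraph f K := by
    refine ⟨Or.inr rfl, ?_, by ring⟩
    dsimp only
    rw [haff, le_div_iff₀ hz]
    calc (f (u, 0) + w / z * δ + (w / z) ^ 2 / K) * z
        = z * f (u, 0) + w * δ + w ^ 2 / (z * K) := by field_simp
      _ ≤ t - (1 - z) * f (u, 0) := by linarith
  have hcomb : z • (u + (w / z) • γ, (1 : ℝ), t₁, w / z) + (1 - z) • (u, (0 : ℝ), f (u, 0), (0 : ℝ))
      = (x, z, t, w) := by
    simp only [Prod.smul_mk, Prod.mk_add_mk, smul_eq_mul, Prod.mk.injEq]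
    refine ⟨?_, by ring, by simp only [t₁]; field_simp; ring, by field_simp; ring⟩
    simp only [u, smul_add, smul_smul]
    field_simp
    module
  rw [← hcomb]
  exact convex_convexHull ℝ _ (subset_convexHull ℝ _ hP₁) (subset_convexHull ℝ _ hP₀) hz.le
    (by linarith) (by ring)

theorem convexHull_onOffEpigraph (hf : ConvexOn ℝ univ f) (hK : 0 < K) (γ : E) (δ : ℝ)
    (haff : ∀ u v, f (u + v • γ, v) = f (u, 0) + v * δ) :
    convexHull ℝ (onOffEpigraph f K) = perspectiveRelaxation f K :=
  (convexHull_min (onOffEpigraph_subset_perspectiveRelaxation hK)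
    (convex_perspectiveRelaxation hf hK.le)).antisymm
    (perspectiveRelaxation_subset_convexHull hK γ δ haff)

end PerspectiveRelaxation

section Quadratic

variable {ι : Type*} [Fintype ι]

lemma convexOn_dotProduct_mulVec {M : Matrix ι ι ℝ} (hM : ∀ u, 0 ≤ u ⬝ᵥ M *ᵥ u) :
    ConvexOn ℝ univ fun u : ι → ℝ => u ⬝ᵥ M *ᵥ u := by
  refine ⟨convex_univ, fun u _ v _ l m hl hm hlm => ?_⟩
  obtain rfl : m = 1 - l := by linarith
  have hgap : l * (u ⬝ᵥ M *ᵥ u) + (1 - l) * (v ⬝ᵥ M *ᵥ v)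
      - (l • u + (1 - l) • v) ⬝ᵥ M *ᵥ (l • u + (1 - l) • v)
      = l * (1 - l) * ((u - v) ⬝ᵥ M *ᵥ (u - v)) := by
    simp only [mulVec_add, mulVec_sub, mulVec_smul, dotProduct_add, dotProduct_sub, add_dotProduct,
      sub_dotProduct, dotProduct_smul, smul_dotProduct, smul_eq_mul]
    ring
  rw [smul_eq_mul, smul_eq_mul]
  linarith [mul_nonneg (mul_nonneg hl hm) (hM (u - v))]

lemma dotProduct_mulVec_sub_smul {M : Matrix ι ι ℝ} (hM : M.IsSymm) {a γ : ι → ℝ}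
    (hγ : M *ᵥ γ = a) (x : ι → ℝ) (w : ℝ) :
    (x - w • γ) ⬝ᵥ M *ᵥ (x - w • γ) = x ⬝ᵥ M *ᵥ x - 2 * w * (a ⬝ᵥ x) + w ^ 2 * (a ⬝ᵥ γ) := by
  have hγx : γ ⬝ᵥ M *ᵥ x = a ⬝ᵥ x := by
    rw [dotProduct_mulVec, ← mulVec_transpose, hM.eq, hγ]
  simp only [mulVec_sub, mulVec_smul, hγ, dotProduct_sub, sub_dotProduct, dotProduct_smul,
    smul_dotProduct, hγx, smul_eq_mul, dotProduct_comm x a, dotProduct_comm γ a]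
  ring

def hullQuadratic (M : Matrix ι ι ℝ) (a γ : ι → ℝ) (c : ℝ) (q : (ι → ℝ) × ℝ) : ℝ :=
  c ^ 2 + 2 * c * (q.2 - a ⬝ᵥ q.1) + (q.1 - q.2 • γ) ⬝ᵥ M *ᵥ (q.1 - q.2 • γ)

lemma continuous_hullQuadratic (M : Matrix ι ι ℝ) (a γ : ι → ℝ) (c : ℝ) :
    Continuous (hullQuadratic M a γ c) := by
  unfold hullQuadratic
  fun_prop

lemma convexOn_hullQuadratic {M : Matrix ι ι ℝ} (hM : ∀ u, 0 ≤ u ⬝ᵥ M *ᵥ u)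
    (a γ : ι → ℝ) (c : ℝ) : ConvexOn ℝ univ (hullQuadratic M a γ c) := by
  refine ⟨convex_univ, ?_⟩
  rintro ⟨x₁, w₁⟩ - ⟨x₂, w₂⟩ - l m hl hm hlm
  have hq := (convexOn_dotProduct_mulVec hM).2 (mem_univ (x₁ - w₁ • γ)) (mem_univ (x₂ - w₂ • γ))
    hl hm hlm
  have hshift : (l • x₁ + m • x₂) - (l * w₁ + m * w₂) • γ
      = l • (x₁ - w₁ • γ) + m • (x₂ - w₂ • γ) := by module
  simp only [hullQuadratic, Prod.smul_mk, Prod.mk_add_mk, smul_eq_mul, hshift, dotProduct_add,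
    dotProduct_smul] at hq ⊢
  obtain rfl : m = 1 - l := by linarith
  linarith

lemma hullQuadratic_add_smul (M : Matrix ι ι ℝ) (a γ : ι → ℝ) (c : ℝ) (u : ι → ℝ) (v : ℝ) :
    hullQuadratic M a γ c (u + v • γ, v) =
      hullQuadratic M a γ c (u, 0) + v * (2 * c * (1 - a ⬝ᵥ γ)) := by
  simp only [hullQuadratic, add_sub_cancel_right, zero_smul, sub_zero, dotProduct_add,
    dotProduct_smul, smul_eq_mul]
  ring

variable [DecidableEq ι] {Q : Matrix ι ι ℝ} {a : ι → ℝ}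

lemma add_vecMulVec_mulVec_smul_inv_mulVec (hQ : IsUnit Q) (hK : 1 + a ⬝ᵥ Q⁻¹ *ᵥ a ≠ 0) :
    (Q + vecMulVec a a) *ᵥ ((1 / (1 + a ⬝ᵥ Q⁻¹ *ᵥ a)) • Q⁻¹ *ᵥ a) = a := by
  rw [mulVec_smul, add_mulVec, mulVec_mulVec, mul_nonsing_inv _ ((isUnit_iff_isUnit_det Q).1 hQ),
    one_mulVec, vecMulVec_mulVec, op_smul_eq_smul]
  match_scalars
  field_simp

lemma hullQuadratic_add_sq_div (hQ : Q.IsSymm) (hQu : IsUnit Q) (hK : 1 + a ⬝ᵥ Q⁻¹ *ᵥ a ≠ 0)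
    (c : ℝ) (x : ι → ℝ) (w : ℝ) :
    hullQuadratic (Q + vecMulVec a a) a ((1 / (1 + a ⬝ᵥ Q⁻¹ *ᵥ a)) • Q⁻¹ *ᵥ a) c (x, w)
      + w ^ 2 / (1 + a ⬝ᵥ Q⁻¹ *ᵥ a) = x ⬝ᵥ Q *ᵥ x + (c + w - a ⬝ᵥ x) ^ 2 := by
  have hM : (Q + vecMulVec a a).IsSymm := hQ.add (by simp [IsSymm, transpose_vecMulVec])
  rw [hullQuadratic, dotProduct_mulVec_sub_smul hM (add_vecMulVec_mulVec_smul_inv_mulVec hQu hK),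
    add_mulVec, dotProduct_add, vecMulVec_mulVec, op_smul_eq_smul, dotProduct_smul,
    dotProduct_smul, smul_eq_mul, smul_eq_mul, dotProduct_comm x a]
  field_simp
  ring

end Quadratic

/-- Convex hull description of the extended non-homogeneous set
`Ŷ_{c,Q} = {(x,z,t,w) : z ∈ {0,1}, t ≥ xᵀQx + (c + w - aᵀx)², w(1-z) = 0}`. -/
theorem closure_convexHull_nonhomogeneous
    (n : ℕ) (Q : Matrix (Fin n) (Fin n) ℝ) (hQ : Q.PosDef) (a : Fin n → ℝ) (c : ℝ) :
    closure (convexHull ℝ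
      {p : (Fin n → ℝ) × ℝ × ℝ × ℝ |
        (p.2.1 = 0 ∨ p.2.1 = 1) ∧
          p.1 ⬝ᵥ Q.mulVec p.1 + (c + p.2.2.2 - a ⬝ᵥ p.1) ^ 2 ≤ p.2.2.1 ∧
          p.2.2.2 * (1 - p.2.1) = 0}) =
    {p : (Fin n → ℝ) × ℝ × ℝ × ℝ |
      p.2.1 ∈ Set.Icc (0 : ℝ) 1 ∧
        ∃ s : ℝ, 0 ≤ s ∧
          p.2.2.2 ^ 2 ≤ s * p.2.1 * (1 + a ⬝ᵥ Q⁻¹.mulVec a) ∧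
          c ^ 2 + 2 * c * (p.2.2.2 - a ⬝ᵥ p.1) +
            (p.1 - p.2.2.2 • ((1 / (1 + a ⬝ᵥ Q⁻¹.mulVec a)) • Q⁻¹.mulVec a)) ⬝ᵥ
              (Q + vecMulVec a a).mulVec
                (p.1 - p.2.2.2 • ((1 / (1 + a ⬝ᵥ Q⁻¹.mulVec a)) • Q⁻¹.mulVec a)) +
            s ≤ p.2.2.1} := by
  have hK : 0 < 1 + a ⬝ᵥ Q⁻¹ *ᵥ a := by
    have := hQ.posSemidef.inv.dotProduct_mulVec_nonneg a
    simp only [star_trivial] at this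
    linarith
  have hM : ∀ u, 0 ≤ u ⬝ᵥ (Q + vecMulVec a a) *ᵥ u := fun u => by
    simpa using (hQ.posSemidef.add (posSemidef_vecMulVec_self_star a)).dotProduct_mulVec_nonneg u
  refine Eq.trans ?_ (isClosed_perspectiveRelaxation
    (continuous_hullQuadratic (Q + vecMulVec a a) a ((1 / (1 + a ⬝ᵥ Q⁻¹ *ᵥ a)) • Q⁻¹ *ᵥ a) c)
    hK.le).closure_eq
  rw [← convexHull_onOffEpigraph (convexOn_hullQuadratic hM _ _ c) hK _ _
    (hullQuadratic_add_smul _ _ _ c)]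
  congr 2
  ext ⟨x, z, t, w⟩
  simp only [onOffEpigraph, mem_ofPred_eq,
    hullQuadratic_add_sq_div (isHermitian_iff_isSymm.1 hQ.isHermitian) hQ.isUnit hK.ne']
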